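/- arXiv:2512.09918 — 2 statements merged into one kernel-verified Lean document; each statement's English description precedes it below -/
import Mathlib

section
/- Let H be a connected graded Hopf algebra, A a commutative algebra, and R : A → A an idempotent Rota–Baxter operator (weight −1). For any character φ : H → A, define recursively φ⁻(x) = −R(φ(x) + ∑ φ⁻(x') φ(x'')) on elements of positive degree (where Δ̃(x) = ∑ x' ⊗ x'' is the reduced coproduct), φ⁻(1) = 1. Then φ⁻ is a character, i.e., φ⁻(xy) = φ⁻(x)φ⁻(y) for all x, y ∈ H. -/
/-!
For `x` homogeneous of degree `m`, connectedness forces `Δ x = x ⊗ 1 + X` with `X` a sum of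
tensors `a ⊗ b`, `deg a < m`, and for `m > 0` the Bogoliubov recursion reads
`φ⁻ x = -R (F X)`, where `F = m_A ∘ (φ⁻ ⊗ φ)`. For homogeneous `x`, `y` of positive degree,
`Δ (x y) = x y ⊗ 1 + (x ⊗ 1) Y + X (y ⊗ 1) + X Y`, and by induction on `deg x + deg y` the map
`F` is multiplicative on the last three products. With `a = F X`, `b = F Y` this gives
`φ⁻ (x y) = -R (-R a * b + a * -R b + a * b)`, which the Rota–Baxter identity turns into
`R a * R b = φ⁻ x * φ⁻ y`.
-/

open TensorProduct

/-- The convolution product `f ⋆ g = m_A ∘ (f ⊗ g) ∘ Δ_H`. -/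
noncomputable def convProd {K H A : Type*} [CommSemiring K] [Semiring H] [HopfAlgebra K H]
    [Semiring A] [Algebra K A] (f g : H →ₗ[K] A) : H →ₗ[K] A :=
  (LinearMap.mul' K A) ∘ₗ (TensorProduct.map f g) ∘ₗ Coalgebra.comul

open DirectSum

section GradedTensors

variable {K H : Type*} [CommSemiring K] [AddCommMonoid H] [Module K H]
  (𝒜 : ℕ → Submodule K H)

noncomputable def gradedTensors (s : Set (ℕ × ℕ)) : Submodule K (H ⊗[K] H) :=
  Submodule.span K {t | ∃ pq ∈ s, ∃ a ∈ 𝒜 pq.1, ∃ b ∈ 𝒜 pq.2, a ⊗ₜ b = t}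

variable {𝒜}

theorem tmul_mem_gradedTensors {s : Set (ℕ × ℕ)} {p q : ℕ} (hpq : (p, q) ∈ s) {a b : H}
    (ha : a ∈ 𝒜 p) (hb : b ∈ 𝒜 q) : a ⊗ₜ b ∈ gradedTensors 𝒜 s :=
  Submodule.subset_span ⟨(p, q), hpq, a, ha, b, hb, rfl⟩

theorem gradedTensors_le_iff {s : Set (ℕ × ℕ)} {N : Submodule K (H ⊗[K] H)} :
    gradedTensors 𝒜 s ≤ N ↔ ∀ pq ∈ s, ∀ a ∈ 𝒜 pq.1, ∀ b ∈ 𝒜 pq.2, a ⊗ₜ b ∈ N := by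
  refine Submodule.span_le.trans ⟨fun h pq hpq a ha b hb => h ⟨pq, hpq, a, ha, b, hb, rfl⟩, ?_⟩
  rintro h _ ⟨pq, hpq, a, ha, b, hb, rfl⟩
  exact h pq hpq a ha b hb

theorem gradedTensors_mono {s s' : Set (ℕ × ℕ)} (h : s ⊆ s') :
    gradedTensors 𝒜 s ≤ gradedTensors 𝒜 s' :=
  gradedTensors_le_iff.2 fun _ hpq _ ha _ hb => tmul_mem_gradedTensors (h hpq) ha hb

theorem iSup_range_map_subtype_le_gradedTensors (s : Set (ℕ × ℕ)) :
    ⨆ pq ∈ s, LinearMap.range (TensorProduct.map (𝒜 pq.1).subtype (𝒜 pq.2).subtype) ≤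
      gradedTensors 𝒜 s := by
  refine iSup₂_le fun pq hpq => ?_
  rw [TensorProduct.range_map_eq_span_tmul, Submodule.span_le]
  rintro _ ⟨a, b, rfl⟩
  exact tmul_mem_gradedTensors hpq a.2 b.2

end GradedTensors

section GradedProj

variable {K H : Type*} [CommSemiring K] [AddCommMonoid H] [Module K H]
  (𝒜 : ℕ → Submodule K H) [Decomposition 𝒜]

noncomputable def gradedProj (i : ℕ) : H →ₗ[K] H :=
  (𝒜 i).subtype ∘ₗ component K ℕ (fun j => 𝒜 j) i ∘ₗ (decomposeLinearEquiv 𝒜).toLinearMap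

@[simp]
theorem gradedProj_apply (i : ℕ) (x : H) : gradedProj 𝒜 i x = decompose 𝒜 x i := rfl

end GradedProj

section CounitProjections

variable {K H : Type*} [CommSemiring K] [AddCommMonoid H] [Module K H] [Coalgebra K H]
  {𝒜 : ℕ → Submodule K H} [Decomposition 𝒜]

theorem gradedProj_rid_lTensor_counit_eq_zero {s : Set (ℕ × ℕ)} {i : ℕ}
    (hs : ∀ pq ∈ s, pq.1 ≠ i) {X : H ⊗[K] H} (hX : X ∈ gradedTensors 𝒜 s) :
    gradedProj 𝒜 i (TensorProduct.rid K H (LinearMap.lTensor H Coalgebra.counit X)) = 0 := by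
  refine (gradedTensors_le_iff.2 fun pq hpq a ha b _ => ?_ :
    gradedTensors 𝒜 s ≤ LinearMap.ker (gradedProj 𝒜 i ∘ₗ (TensorProduct.rid K H).toLinearMap ∘ₗ
      LinearMap.lTensor H Coalgebra.counit)) hX
  simp [decompose_of_mem_ne 𝒜 ha (hs pq hpq)]

theorem gradedProj_lid_rTensor_counit_eq_zero {s : Set (ℕ × ℕ)} {i : ℕ}
    (hs : ∀ pq ∈ s, pq.2 ≠ i) {X : H ⊗[K] H} (hX : X ∈ gradedTensors 𝒜 s) :
    gradedProj 𝒜 i (TensorProduct.lid K H (LinearMap.rTensor H Coalgebra.counit X)) = 0 := by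
  refine (gradedTensors_le_iff.2 fun pq hpq a _ b hb => ?_ :
    gradedTensors 𝒜 s ≤ LinearMap.ker (gradedProj 𝒜 i ∘ₗ (TensorProduct.lid K H).toLinearMap ∘ₗ
      LinearMap.rTensor H Coalgebra.counit)) hX
  simp [decompose_of_mem_ne 𝒜 hb (hs pq hpq)]

end CounitProjections

section ConnectedGraded

variable {K H : Type*} [CommSemiring K] [Semiring H] [Bialgebra K H]
  {𝒜 : ℕ → Submodule K H} [Decomposition 𝒜]

theorem comul_eq_tmul_one_add (hconn : 𝒜 0 = Submodule.span K {1}) {m : ℕ} {x : H}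
    (hx : x ∈ 𝒜 m) (hΔx : Coalgebra.comul (R := K) x ∈ gradedTensors 𝒜 {pq | pq.1 + pq.2 = m}) :
    ∃ X ∈ gradedTensors 𝒜 {pq | pq.1 + pq.2 = m ∧ 0 < pq.2},
      Coalgebra.comul (R := K) x = x ⊗ₜ 1 + X := by
  have hsplit : gradedTensors 𝒜 {pq | pq.1 + pq.2 = m} ≤
      (𝒜 m).map ((TensorProduct.mk K H H).flip 1) ⊔
        gradedTensors 𝒜 {pq | pq.1 + pq.2 = m ∧ 0 < pq.2} := by
    refine gradedTensors_le_iff.2 fun ⟨p, q⟩ hpq a ha b hb => ?_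
    rcases Nat.eq_zero_or_pos q with rfl | hq
    · obtain ⟨c, rfl⟩ := Submodule.mem_span_singleton.mp (hconn ▸ hb)
      refine Submodule.mem_sup_left ⟨c • a, Submodule.smul_mem _ c (hpq ▸ ha), ?_⟩
      simp
    · exact Submodule.mem_sup_right (tmul_mem_gradedTensors
        (s := {pq | pq.1 + pq.2 = m ∧ 0 < pq.2}) ⟨hpq, hq⟩ ha hb)
  obtain ⟨_, ⟨w, hw, rfl⟩, X, hX, hwX⟩ := Submodule.mem_sup.mp (hsplit hΔx)
  -- the degree `m` part of `(id ⊗ ε) (Δ x) = x` is `w`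
  have hwx : w = x := by
    have h := congrArg (fun t => gradedProj 𝒜 m
      (TensorProduct.rid K H (LinearMap.lTensor H Coalgebra.counit t))) hwX
    have hX0 := gradedProj_rid_lTensor_counit_eq_zero (i := m)
      (fun pq (hpq : pq.1 + pq.2 = m ∧ 0 < pq.2) => by omega) hX
    rw [map_add, map_add, map_add, hX0, add_zero] at h
    simpa [decompose_of_mem_same 𝒜 hw, decompose_of_mem_same 𝒜 hx] using h
  exact ⟨X, hX, hwx ▸ hwX.symm⟩

theorem comul_mul_eq_tmul_one_add {x y : H} {X Y : H ⊗[K] H}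
    (hΔx : Coalgebra.comul (R := K) x = x ⊗ₜ 1 + X)
    (hΔy : Coalgebra.comul (R := K) y = y ⊗ₜ 1 + Y) :
    Coalgebra.comul (R := K) (x * y) = (x * y) ⊗ₜ 1 + ((x ⊗ₜ 1) * Y + X * (y ⊗ₜ 1) + X * Y) := by
  rw [Bialgebra.comul_mul, hΔx, hΔy]
  simp only [add_mul, mul_add, Algebra.TensorProduct.tmul_mul_tmul, one_mul]
  abel

theorem counit_eq_zero_of_mem (hconn : 𝒜 0 = Submodule.span K {1}) {m : ℕ} (hm : 0 < m) {x : H}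
    (hx : x ∈ 𝒜 m) (hΔx : Coalgebra.comul (R := K) x ∈ gradedTensors 𝒜 {pq | pq.1 + pq.2 = m}) :
    Coalgebra.counit (R := K) x = 0 := by
  obtain ⟨X, hX, hΔ⟩ := comul_eq_tmul_one_add hconn hx hΔx
  have h1 : (1 : H) ∈ 𝒜 0 := hconn ▸ Submodule.mem_span_singleton_self 1
  -- the degree `0` part of `(ε ⊗ id) (Δ x) = x` is `ε x • 1`
  have h := congrArg (fun t => gradedProj 𝒜 0
    (TensorProduct.lid K H (LinearMap.rTensor H Coalgebra.counit t))) hΔ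
  have hX0 := gradedProj_lid_rTensor_counit_eq_zero (i := 0)
    (fun pq (hpq : pq.1 + pq.2 = m ∧ 0 < pq.2) => hpq.2.ne') hX
  rw [map_add, map_add, map_add, hX0, add_zero] at h
  have h' : Coalgebra.counit (R := K) x • (1 : H) = 0 := by
    simpa [decompose_of_mem_ne 𝒜 hx hm.ne', decompose_of_mem_same 𝒜 h1] using h.symm
  simpa using congrArg (Coalgebra.counit (R := K)) h'

end ConnectedGraded

section TensorMultiplicativity

variable {K H A : Type*} [CommSemiring K] [Semiring H] [Algebra K H] [CommSemiring A]
  [Algebra K A] {𝒜 : ℕ → Submodule K H}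

theorem mul'_map_mul_of_mem {f : H →ₗ[K] A} (g : H →ₐ[K] A) {n n' : ℕ}
    (hf : ∀ p < n, ∀ q < n', ∀ a ∈ 𝒜 p, ∀ c ∈ 𝒜 q, f (a * c) = f a * f c)
    {t t' : H ⊗[K] H} (ht : t ∈ gradedTensors 𝒜 {pq | pq.1 < n})
    (ht' : t' ∈ gradedTensors 𝒜 {pq | pq.1 < n'}) :
    LinearMap.mul' K A (map f g (t * t')) =
      LinearMap.mul' K A (map f g t) * LinearMap.mul' K A (map f g t') := by
  induction ht, ht' using Submodule.span_induction₂ with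
  | mem_mem t t' ht ht' =>
    obtain ⟨⟨p, q⟩, hp, a, ha, b, -, rfl⟩ := ht
    obtain ⟨⟨p', q'⟩, hp', c, hc, d, -, rfl⟩ := ht'
    simp only [Algebra.TensorProduct.tmul_mul_tmul, map_tmul, LinearMap.mul'_apply,
      LinearMap.coe_coe, map_mul, hf p hp p' hp' a ha c hc]
    ring
  | zero_left | zero_right => simp
  | add_left _ _ _ _ _ _ h₁ h₂ => simp only [add_mul, map_add, h₁, h₂]
  | add_right _ _ _ _ _ _ h₁ h₂ => simp only [mul_add, map_add, h₁, h₂]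
  | smul_left _ _ _ _ _ h => simp only [smul_mul_assoc, map_smul, h]
  | smul_right _ _ _ _ _ h => simp only [mul_smul_comm, map_smul, h]

end TensorMultiplicativity

section Multiplicativity

variable {K H A : Type*} [CommSemiring K] [Semiring H] [Algebra K H] [Semiring A]
  [Algebra K A]

theorem map_mul_of_mem_span_one_left {f : H →ₗ[K] A} (hf : f 1 = 1) {x : H}
    (hx : x ∈ Submodule.span K {1}) (y : H) : f (x * y) = f x * f y := by
  obtain ⟨c, rfl⟩ := Submodule.mem_span_singleton.mp hx
  simp [hf]

theorem map_mul_of_mem_span_one_right {f : H →ₗ[K] A} (hf : f 1 = 1) (x : H) {y : H}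
    (hy : y ∈ Submodule.span K {1}) : f (x * y) = f x * f y := by
  obtain ⟨c, rfl⟩ := Submodule.mem_span_singleton.mp hy
  simp [hf]

theorem map_mul_of_homogeneous (𝒜 : ℕ → Submodule K H) [Decomposition 𝒜] {f : H →ₗ[K] A}
    (h : ∀ m k, ∀ x ∈ 𝒜 m, ∀ y ∈ 𝒜 k, f (x * y) = f x * f y) (x y : H) :
    f (x * y) = f x * f y := by
  induction x using Decomposition.inductionOn 𝒜 with
  | zero => simp
  | add x x' hx hx' => simp only [add_mul, map_add, hx, hx']
  | homogeneous x =>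
    induction y using Decomposition.inductionOn 𝒜 with
    | zero => simp
    | add y y' hy hy' => simp only [mul_add, map_add, hy, hy']
    | homogeneous y => exact h _ _ x x.2 y y.2

end Multiplicativity

theorem rotaBaxter_neg_map_mul {A F : Type*} [CommRing A] [FunLike F A A]
    [AddMonoidHomClass F A A] (R : F)
    (hRB : ∀ a b, R (a * b) + R a * R b = R (R a * b) + R (a * R b)) (a b : A) :
    -R (-R a * b + a * -R b + a * b) = -R a * -R b := by
  rw [neg_mul, mul_neg, map_add, map_add, map_neg, map_neg]
  linear_combination (hRB a b).symm

section Counterterm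

variable {K H A : Type*} [CommSemiring K] [Semiring H] [HopfAlgebra K H] [CommRing A]
  [Algebra K A]

theorem counterterm_eq_of_comul_eq (R : A →ₗ[K] A) (φ : H →ₐ[K] A) {φm : H →ₗ[K] A}
    (hrec : ∀ x : H, Coalgebra.counit (R := K) x = 0 →
      φm x = - R ((convProd φm (φ : H →ₗ[K] A)) x - φm x))
    {x : H} {X : H ⊗[K] H} (hε : Coalgebra.counit (R := K) x = 0)
    (hΔ : Coalgebra.comul (R := K) x = x ⊗ₜ 1 + X) :
    φm x = -R (LinearMap.mul' K A (map φm φ X)) := by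
  rw [hrec x hε, convProd, LinearMap.comp_apply, LinearMap.comp_apply, hΔ]
  simp

theorem counterterm_map_mul_of_mem {𝒜 : ℕ → Submodule K H} [Decomposition 𝒜]
    (hconn : 𝒜 0 = Submodule.span K {1})
    (hΔ : ∀ n, ∀ x ∈ 𝒜 n, Coalgebra.comul (R := K) x ∈ gradedTensors 𝒜 {pq | pq.1 + pq.2 = n})
    (R : A →ₗ[K] A) (hRB : ∀ a b, R (a * b) + R a * R b = R (R a * b) + R (a * R b))
    (φ : H →ₐ[K] A) {φm : H →ₗ[K] A} (hφm1 : φm 1 = 1)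
    (hrec : ∀ x : H, Coalgebra.counit (R := K) x = 0 →
      φm x = - R ((convProd φm (φ : H →ₗ[K] A)) x - φm x))
    {m k : ℕ} {x y : H} (hx : x ∈ 𝒜 m) (hy : y ∈ 𝒜 k) :
    φm (x * y) = φm x * φm y := by
  induction hn : m + k using Nat.strong_induction_on generalizing m k x y with
  | _ n ih =>
  rcases Nat.eq_zero_or_pos m with rfl | hm
  · exact map_mul_of_mem_span_one_left hφm1 (hconn ▸ hx) y
  rcases Nat.eq_zero_or_pos k with rfl | hk
  · exact map_mul_of_mem_span_one_right hφm1 x (hconn ▸ hy)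
  have h1 : (1 : H) ∈ 𝒜 0 := hconn ▸ Submodule.mem_span_singleton_self 1
  have hmul : ∀ p q, p + q < m + k → ∀ a ∈ 𝒜 p, ∀ c ∈ 𝒜 q, φm (a * c) = φm a * φm c :=
    fun p q hpq a ha c hc => ih (p + q) (hn ▸ hpq) ha hc rfl
  obtain ⟨X, hX, hΔx⟩ := comul_eq_tmul_one_add hconn hx (hΔ m x hx)
  obtain ⟨Y, hY, hΔy⟩ := comul_eq_tmul_one_add hconn hy (hΔ k y hy)
  have hεx := counit_eq_zero_of_mem hconn hm hx (hΔ m x hx)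
  have hεy := counit_eq_zero_of_mem hconn hk hy (hΔ k y hy)
  have hεxy : Coalgebra.counit (R := K) (x * y) = 0 := by
    rw [Bialgebra.counit_mul, hεx, zero_mul]
  have hΔxy := comul_mul_eq_tmul_one_add hΔx hΔy
  have hX' : X ∈ gradedTensors 𝒜 {pq | pq.1 < m} :=
    gradedTensors_mono (by rintro pq ⟨hsum, hpos⟩; exact show pq.1 < m by omega) hX
  have hY' : Y ∈ gradedTensors 𝒜 {pq | pq.1 < k} :=
    gradedTensors_mono (by rintro pq ⟨hsum, hpos⟩; exact show pq.1 < k by omega) hY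
  have hx1 : x ⊗ₜ 1 ∈ gradedTensors 𝒜 {pq | pq.1 < m + 1} :=
    tmul_mem_gradedTensors (q := 0) (Nat.lt_succ_self m) hx h1
  have hy1 : y ⊗ₜ 1 ∈ gradedTensors 𝒜 {pq | pq.1 < k + 1} :=
    tmul_mem_gradedTensors (q := 0) (Nat.lt_succ_self k) hy h1
  have hF : LinearMap.mul' K A (map φm φ ((x ⊗ₜ 1) * Y + X * (y ⊗ₜ 1) + X * Y)) =
      φm x * LinearMap.mul' K A (map φm φ Y) + LinearMap.mul' K A (map φm φ X) * φm y +
        LinearMap.mul' K A (map φm φ X) * LinearMap.mul' K A (map φm φ Y) := by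
    rw [map_add, map_add, map_add, map_add,
      mul'_map_mul_of_mem φ (fun p hp q hq => hmul p q (by omega)) hx1 hY',
      mul'_map_mul_of_mem φ (fun p hp q hq => hmul p q (by omega)) hX' hy1,
      mul'_map_mul_of_mem φ (fun p hp q hq => hmul p q (by omega)) hX' hY']
    simp
  rw [counterterm_eq_of_comul_eq R φ hrec hεxy hΔxy, hF,
    counterterm_eq_of_comul_eq R φ hrec hεx hΔx, counterterm_eq_of_comul_eq R φ hrec hεy hΔy]
  exact rotaBaxter_neg_map_mul R hRB _ _

end Counterterm

theorem counterterm_map_is_character_general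
    (K : Type*) [Field K]
    (H : Type*) [Semiring H] [HopfAlgebra K H]
    (𝒜 : ℕ → Submodule K H) (hinternal : DirectSum.IsInternal 𝒜)
    (hconn : 𝒜 0 = Submodule.span K {(1 : H)})
    (hΔ : ∀ n : ℕ, ∀ x ∈ 𝒜 n, Coalgebra.comul (R := K) x ∈
      ⨆ (p : ℕ × ℕ) (_ : p.1 + p.2 = n),
        LinearMap.range (TensorProduct.map (𝒜 p.1).subtype (𝒜 p.2).subtype))
    (A : Type*) [CommRing A] [Algebra K A]
    (R : A →ₗ[K] A)
    (hRB : ∀ a b, R (a * b) + R a * R b = R (R a * b) + R (a * R b))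
    (φ : H →ₐ[K] A)
    (φm : H →ₗ[K] A) (hφm1 : φm 1 = 1)
    (hrec : ∀ x : H, Coalgebra.counit (R := K) x = 0 →
      φm x = - R ((convProd φm (φ : H →ₗ[K] A)) x - φm x)) :
    ∀ x y : H, φm (x * y) = φm x * φm y := by
  let _ := hinternal.chooseDecomposition
  have hΔ' : ∀ n, ∀ x ∈ 𝒜 n,
      Coalgebra.comul (R := K) x ∈ gradedTensors 𝒜 {pq | pq.1 + pq.2 = n} :=
    fun n x hx => iSup_range_map_subtype_le_gradedTensors _ (hΔ n x hx)
  exact map_mul_of_homogeneous 𝒜 fun m k x hx y hy =>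
    counterterm_map_mul_of_mem hconn hΔ' R hRB φ hφm1 hrec hx hy

/-- Let `H` be a connected graded Hopf algebra over a field `K` of
characteristic zero, `A` a commutative algebra and `R : A → A` an idempotent Rota–Baxter
operator of weight `-1`.  Let `φ : H → A` be a character and `φ⁻` the counterterm map given by
the Bogoliubov recursion `φ⁻(x) = -R(φ(x) + ∑ φ⁻(x')φ(x''))` on elements of positive degree
(equivalently, `φ⁻(x) = -R((φ⁻ ⋆ φ)(x) - φ⁻(x))` on the augmentation ideal) together with
`φ⁻(1) = 1`.  Then `φ⁻` is a character: `φ⁻(xy) = φ⁻(x) φ⁻(y)` for all `x, y ∈ H`. -/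
theorem counterterm_map_is_character
    (K : Type*) [Field K] [CharZero K]
    (H : Type*) [Semiring H] [HopfAlgebra K H]
    (𝒜 : ℕ → Submodule K H) (hinternal : DirectSum.IsInternal 𝒜)
    (hconn : 𝒜 0 = Submodule.span K {(1 : H)})
    (hΔ : ∀ n : ℕ, ∀ x ∈ 𝒜 n, Coalgebra.comul (R := K) x ∈
      ⨆ (p : ℕ × ℕ) (_ : p.1 + p.2 = n),
        LinearMap.range (TensorProduct.map (𝒜 p.1).subtype (𝒜 p.2).subtype))
    (A : Type*) [CommRing A] [Algebra K A]
    (R : A →ₗ[K] A)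
    (hRidem : ∀ a, R (R a) = R a)
    (hRB : ∀ a b, R (a * b) + R a * R b = R (R a * b) + R (a * R b))
    (φ : H →ₐ[K] A)
    (φm : H →ₗ[K] A) (hφm1 : φm 1 = 1)
    (hrec : ∀ x : H, Coalgebra.counit (R := K) x = 0 →
      φm x = - R ((convProd φm (φ : H →ₗ[K] A)) x - φm x)) :
    ∀ x y : H, φm (x * y) = φm x * φm y :=
  counterterm_map_is_character_general K H 𝒜 hinternal hconn hΔ A R hRB φ φm hφm1 hrec
end

section
/- In the algebraic Birkhoff decomposition, with φ⁻ defined by the Bogoliubov recursion as above and φ⁺ := φ⁻ ⋆ φ, one has φ⁺(x) = (Id − R)(φ(x) + ∑ φ⁻(x')φ(x'')) for all x of positive degree; in particular φ⁺ takes values in the kernel of R on elements of positive degree, and φ⁻ takes values in the span of the image of R and the unit. -/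
open TensorProduct

/-- In the algebraic Birkhoff decomposition, with `φ⁻` defined by the
Bogoliubov recursion and `φ⁺ := φ⁻ ⋆ φ`, one has `φ⁺(x) = (Id - R)(φ̄(x))` for all `x` of
positive degree, where `φ̄(x) = φ(x) + ∑ φ⁻(x')φ(x'') = (φ⁻ ⋆ φ)(x) - φ⁻(x)`; in particular
`φ⁺` takes values in the kernel of `R` on elements of positive degree, and `φ⁻` takes values
in the span of the image of `R` and the unit. -/
theorem birkhoff_decomposition_values
    (K : Type*) [Field K] [CharZero K]
    (H : Type*) [Semiring H] [HopfAlgebra K H]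
    (𝒜 : ℕ → Submodule K H) (hinternal : DirectSum.IsInternal 𝒜)
    (hconn : 𝒜 0 = Submodule.span K {(1 : H)})
    (hΔ : ∀ n : ℕ, ∀ x ∈ 𝒜 n, Coalgebra.comul (R := K) x ∈
      ⨆ (p : ℕ × ℕ) (_ : p.1 + p.2 = n),
        LinearMap.range (TensorProduct.map (𝒜 p.1).subtype (𝒜 p.2).subtype))
    (A : Type*) [CommRing A] [Algebra K A]
    (R : A →ₗ[K] A)
    (hRidem : ∀ a, R (R a) = R a)
    (hRB : ∀ a b, R (a * b) + R a * R b = R (R a * b) + R (a * R b))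
    (φ : H →ₐ[K] A)
    (φm : H →ₗ[K] A) (hφm1 : φm 1 = 1)
    (hrec : ∀ x : H, Coalgebra.counit (R := K) x = 0 →
      φm x = - R ((convProd φm (φ : H →ₗ[K] A)) x - φm x)) :
    (∀ x : H, Coalgebra.counit (R := K) x = 0 →
      (convProd φm (φ : H →ₗ[K] A)) x =
        ((convProd φm (φ : H →ₗ[K] A)) x - φm x)
          - R ((convProd φm (φ : H →ₗ[K] A)) x - φm x) ∧
      R ((convProd φm (φ : H →ₗ[K] A)) x) = 0) ∧
    (∀ x : H, φm x ∈ Submodule.span K (Set.range R ∪ {(1 : A)})) := by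
  constructor
  · intro x hx
    have h := hrec x hx
    constructor
    · linear_combination h
    · have : (convProd φm (φ : H →ₗ[K] A)) x =
          ((convProd φm (φ : H →ₗ[K] A)) x - φm x)
            - R ((convProd φm (φ : H →ₗ[K] A)) x - φm x) := by linear_combination h
      rw [this, map_sub, hRidem, sub_self]
  · intro x
    set ε : H →ₗ[K] K := Coalgebra.counit with hεdef
    have hε1 : ε (1 : H) = 1 := Bialgebra.counit_one
    set y : H := x + (-(ε x)) • (1:H) with hydef
    have hy : ε y = 0 := by
      rw [hydef, map_add, map_smul, hε1, smul_eq_mul, mul_one, add_neg_cancel]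
    have h := hrec _ hy
    have hdecomp : φm x = φm y + ε x • (1 : A) := by
      rw [hydef, map_add, map_smul, hφm1, neg_smul]
      abel
    rw [hdecomp]
    apply Submodule.add_mem
    · rw [h]
      apply Submodule.neg_mem
      exact Submodule.subset_span (Or.inl ⟨_, rfl⟩)
    · exact Submodule.smul_mem _ _ (Submodule.subset_span (Or.inr rfl))
end
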